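/- In 𝒰_q^+, the element 𝒢̃_{k+1} commutes with the element E_{nδ} for all k, n ∈ ℕ. -/

import Mathlib

noncomputable section

/-- The commutator `[X,Y] = XY - YX`. -/
def br {A : Type*} [Ring A] (X Y : A) : A := X * Y - Y * X

/-- The `q`-commutator `[X,Y]_q = q·XY - q⁻¹·YX`. -/
def qbr {F : Type*} [Field F] (q : F) {A : Type*} [Ring A] [Algebra F A] (X Y : A) : A :=
  q • (X * Y) - q⁻¹ • (Y * X)

/-- The element `E_δ = q⁻² W₁ W₀ - W₀ W₁`. -/
def Edel {F : Type*} [Field F] (q : F) {A : Type*} [Ring A] [Algebra F A] (W0 W1 : A) : A :=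
  (q ^ 2)⁻¹ • (W1 * W0) - W0 * W1

/-- The elements `E_{nδ+α₀}`. -/
def Em {F : Type*} [Field F] (q : F) {A : Type*} [Ring A] [Algebra F A] (W0 W1 : A) : ℕ → A
  | 0 => W0
  | n + 1 => (q + q⁻¹)⁻¹ • br (Edel q W0 W1) (Em q W0 W1 n)

/-- The elements `E_{nδ+α₁}`. -/
def Ep {F : Type*} [Field F] (q : F) {A : Type*} [Ring A] [Algebra F A] (W0 W1 : A) : ℕ → A
  | 0 => W1
  | n + 1 => (q + q⁻¹)⁻¹ • br (Ep q W0 W1 n) (Edel q W0 W1)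

/-- The elements `E_{nδ}` (with `E_{0δ} = -(q-q⁻¹)⁻¹`). -/
def Ed {F : Type*} [Field F] (q : F) {A : Type*} [Ring A] [Algebra F A] (W0 W1 : A) : ℕ → A
  | 0 => (-(q - q⁻¹)⁻¹) • (1 : A)
  | n + 1 => (q ^ 2)⁻¹ • (Ep q W0 W1 n * W0) - W0 * Ep q W0 W1 n

/-- The generating function with coefficients `a n`. -/
def ser {A : Type*} [Ring A] (a : ℕ → A) : PowerSeries A := PowerSeries.mk a

/-- The rescaled generating function `a(ct)`. -/
def serc {F : Type*} [Field F] {A : Type*} [Ring A] [Algebra F A] (c : F) (a : ℕ → A) :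
    PowerSeries A := PowerSeries.mk fun n => c ^ n • a n

/-- The generating function `a(s)` in the first variable `s`. -/
def serS {A : Type*} [Ring A] (a : ℕ → A) : PowerSeries (PowerSeries A) :=
  PowerSeries.C (R := PowerSeries A) (PowerSeries.mk a)

/-- The generating function `a(t)` in the second variable `t`. -/
def serT {A : Type*} [Ring A] (a : ℕ → A) : PowerSeries (PowerSeries A) :=
  PowerSeries.mk fun n => PowerSeries.C (R := A) (a n)

/-- The rescaled generating function `a(ct)` in the second variable `t`. -/
def serTc {F : Type*} [Field F] {A : Type*} [Ring A] [Algebra F A] (c : F) (a : ℕ → A) :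
    PowerSeries (PowerSeries A) := PowerSeries.mk fun n => PowerSeries.C (R := A) (c ^ n • a n)

/-- The variable `s` viewed in the two-variable power series ring. -/
def sVar (A : Type*) [Ring A] : PowerSeries (PowerSeries A) :=
  PowerSeries.C (R := PowerSeries A) PowerSeries.X

/-- The variable `t` viewed in the two-variable power series ring. -/
def tVar (A : Type*) [Ring A] : PowerSeries (PowerSeries A) := PowerSeries.X

/-- Elements of an `F`-algebra satisfying the defining relations of the alternating
central extension `𝒰_q^+`.  Here `Wm k = 𝒲_{-k}`, `Wp k = 𝒲_{k+1}`, `G k = 𝒢_k`,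
`Gt k = 𝒢̃_k` (with `𝒢₀ = 𝒢̃₀ = 1`). -/
structure AltData (F : Type*) [Field F] (q : F) (A : Type*) [Ring A] [Algebra F A] where
  Wm : ℕ → A
  Wp : ℕ → A
  G : ℕ → A
  Gt : ℕ → A
  hG0 : G 0 = 1
  hGt0 : Gt 0 = 1
  rel1 : ∀ k : ℕ, br (Wm 0) (Wp k) = (1 - (q ^ 2)⁻¹) • (Gt (k + 1) - G (k + 1))
  rel2 : ∀ k : ℕ, br (Wm k) (Wp 0) = (1 - (q ^ 2)⁻¹) • (Gt (k + 1) - G (k + 1))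
  rel3 : ∀ k : ℕ, qbr q (Wm 0) (G (k + 1)) = (q - q⁻¹) • Wm (k + 1)
  rel4 : ∀ k : ℕ, qbr q (Gt (k + 1)) (Wm 0) = (q - q⁻¹) • Wm (k + 1)
  rel5 : ∀ k : ℕ, qbr q (G (k + 1)) (Wp 0) = (q - q⁻¹) • Wp (k + 1)
  rel6 : ∀ k : ℕ, qbr q (Wp 0) (Gt (k + 1)) = (q - q⁻¹) • Wp (k + 1)
  rel7 : ∀ k l : ℕ, br (Wm k) (Wm l) = 0
  rel8 : ∀ k l : ℕ, br (Wp k) (Wp l) = 0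
  rel9 : ∀ k l : ℕ, br (Wm k) (Wp l) + br (Wp k) (Wm l) = 0
  rel10 : ∀ k l : ℕ, br (Wm k) (G (l + 1)) + br (G (k + 1)) (Wm l) = 0
  rel11 : ∀ k l : ℕ, br (Wm k) (Gt (l + 1)) + br (Gt (k + 1)) (Wm l) = 0
  rel12 : ∀ k l : ℕ, br (Wp k) (G (l + 1)) + br (G (k + 1)) (Wp l) = 0
  rel13 : ∀ k l : ℕ, br (Wp k) (Gt (l + 1)) + br (Gt (k + 1)) (Wp l) = 0
  rel14 : ∀ k l : ℕ, br (G (k + 1)) (G (l + 1)) = 0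
  rel15 : ∀ k l : ℕ, br (Gt (k + 1)) (Gt (l + 1)) = 0
  rel16 : ∀ k l : ℕ, br (Gt (k + 1)) (G (l + 1)) + br (G (k + 1)) (Gt (l + 1)) = 0

/-- The scalar `ξ = -q²(q-q⁻¹)⁻²`. -/
def xi {F : Type*} [Field F] (q : F) : F := -(q ^ 2) * ((q - q⁻¹)⁻¹) ^ 2

/-- The central elements `𝒵ⁿ∨` (with `𝒵₀∨ = 1`). -/
def Zv {F : Type*} [Field F] (q : F) {A : Type*} [Ring A] [Algebra F A]
    (D : AltData F q A) (n : ℕ) : A :=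
  (∑ k ∈ Finset.range (n + 1), (q ^ ((n : ℤ) - 2 * (k : ℤ))) • (D.G k * D.Gt (n - k))) -
    q • ∑ k ∈ Finset.range n, (q ^ ((n : ℤ) - 1 - 2 * (k : ℤ))) • (D.Wm k * D.Wp (n - 1 - k))

/-!
Write `E_r = E_{rδ+α₀}` and `P_n = E_{nδ+α₁}`. Since `𝒢̃_{k+1}` commutes with `E_δ`, a direct
computation gives `[𝒢̃_{k+1}, E_{(n+1)δ}] = q⁻¹((q-q⁻¹)[P_n, 𝒲_{-k-1}] - [[P_n, 𝒢̃_{k+1}]_q, 𝒲₀])`,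
so it suffices that `[[P_n, 𝒢̃_i]_q, [𝒢̃_j, E_r]_q]` is symmetric in `i, j`
(take `r = i = 0`, `j = k + 1`).
Bracketing with `E_δ` raises `n` in `[P_n, 𝒢̃_i]_q` and `r` in `[𝒢̃_j, E_r]_q`, so the Jacobi
identity reduces this to `n = 0`, i.e. to the symmetry of `[𝒲_{i+1}, [𝒢̃_j, E_r]_q]`. For a family
`W` consider the exchange identity `[W_{i+1}, [𝒢̃_j, E_r]_q] - [W_i, [𝒢̃_{j+1}, E_r]_q]
= (q-q⁻¹)(𝒢̃_{i+1}[W_j, E_r] - 𝒢̃_{j+1}[W_i, E_r])`;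
its right-hand side is antisymmetric in `i, j`, so for `W_x = 𝒲_{x+1}` it yields the symmetry.
It is proved by induction on `r`: bracketing with `E_δ` turns the identity for `W` at `r + 1` into
the identities at `r` for `W` and for `[W_x, E_δ]`. For `W_x = 𝒢̃_{x+1}` the latter family is zero,
and for `W_x = 𝒲_{x+1}` it is a multiple of `𝒢̃_{x+1}𝒲₁ - 𝒲_{x+2}`, whose identity at `r` follows
from the ones for `𝒲` and `𝒢̃` at `r`.
-/

section Commutator

variable {F : Type*} [Field F] {A : Type*} [Ring A] [Algebra F A]

theorem br_zero_left (y : A) : br 0 y = 0 := by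
  simp only [br, zero_mul, mul_zero, sub_zero]

theorem br_zero_right (x : A) : br x 0 = 0 := by
  simp only [br, zero_mul, mul_zero, sub_zero]

theorem br_smul_left (c : F) (x y : A) : br (c • x) y = c • br x y := by
  simp only [br, smul_mul_assoc, mul_smul_comm, smul_sub]

theorem br_smul_right (c : F) (x y : A) : br x (c • y) = c • br x y := by
  simp only [br, smul_mul_assoc, mul_smul_comm, smul_sub]

theorem br_sub_right (x y z : A) : br x (y - z) = br x y - br x z := by
  simp only [br]; noncomm_ring

theorem br_br_right (x y z : A) : br x (br y z) = br (br x y) z + br y (br x z) := by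
  simp only [br]; noncomm_ring

theorem br_br_left (x y z : A) : br (br x y) z = br (br x z) y + br x (br y z) := by
  simp only [br]; noncomm_ring

theorem qbr_smul_left (q c : F) (x y : A) : qbr q (c • x) y = c • qbr q x y := by
  simp only [qbr, smul_mul_assoc, mul_smul_comm, smul_comm c, smul_sub]

theorem qbr_smul_right (q c : F) (x y : A) : qbr q x (c • y) = c • qbr q x y := by
  simp only [qbr, smul_mul_assoc, mul_smul_comm, smul_comm c, smul_sub]

theorem qbr_one_left (q : F) (x : A) : qbr q 1 x = (q - q⁻¹) • x := by
  simp only [qbr, one_mul, mul_one, sub_smul]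

theorem qbr_one_right (q : F) (x : A) : qbr q x 1 = (q - q⁻¹) • x := by
  simp only [qbr, one_mul, mul_one, sub_smul]

theorem mul_br_of_br_eq_zero {g d : A} (h : br g d = 0) (u : A) :
    g * br d u = br d (g * u) := by
  have key : g * br d u - br d (g * u) = br g d * u := by
    simp only [br]; noncomm_ring
  rwa [h, zero_mul, sub_eq_zero] at key

theorem qbr_br_right_of_br_eq_zero (q : F) {g d : A} (h : br g d = 0) (u : A) :
    qbr q g (br d u) = br d (qbr q g u) := by
  rw [← sub_eq_zero]
  calc qbr q g (br d u) - br d (qbr q g u) = q • (br g d * u) - q⁻¹ • (u * br g d) := by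
        simp only [br, qbr, mul_sub, sub_mul, smul_mul_assoc, mul_smul_comm, smul_sub,
          mul_assoc]
        module
    _ = 0 := by rw [h, zero_mul, mul_zero, smul_zero, smul_zero, sub_zero]

theorem qbr_br_left_of_br_eq_zero (q : F) {g d : A} (h : br g d = 0) (u : A) :
    qbr q (br u d) g = br (qbr q u g) d := by
  rw [← sub_eq_zero]
  calc qbr q (br u d) g - br (qbr q u g) d = q⁻¹ • (br g d * u) - q • (u * br g d) := by
        simp only [br, qbr, mul_sub, sub_mul, smul_mul_assoc, mul_smul_comm, smul_sub,
          mul_assoc]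
        module
    _ = 0 := by rw [h, zero_mul, mul_zero, smul_zero, smul_zero, sub_zero]

end Commutator

theorem symm_of_sub_eq_antisymm {M : Type*} [AddCommGroup M] (B t : ℕ → ℕ → M)
    (h : ∀ i j, B (i + 1) j - B i (j + 1) = t i j - t j i) (i j : ℕ) : B i j = B j i := by
  have shift : ∀ a b, B (a + 1) b - B b (a + 1) = B a (b + 1) - B (b + 1) a := by
    intro a b
    linear_combination (norm := module) h a b + h b a
  have diag : ∀ d a, B (a + d) a = B a (a + d) := by
    intro d
    induction d using Nat.twoStepInduction with
    | zero => intro a; rfl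
    | one => intro a; simpa [sub_eq_zero] using h a a
    | more d ih _ =>
      intro a
      have := shift (a + d + 1) a
      rw [show a + d + 1 = a + 1 + d by omega, ih, sub_self] at this
      rw [show a + (d + 2) = a + 1 + d + 1 by omega]
      exact sub_eq_zero.mp this
  rcases le_total i j with hij | hij
  · obtain ⟨d, rfl⟩ := Nat.exists_eq_add_of_le hij
    exact (diag d i).symm
  · obtain ⟨d, rfl⟩ := Nat.exists_eq_add_of_le hij
    exact diag d j

namespace AltData

variable {F : Type*} [Field F] {q : F} {A : Type*} [Ring A] [Algebra F A] (D : AltData F q A)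

def Eδ : A := Edel q (D.Wm 0) (D.Wp 0)

def Eα₀ (r : ℕ) : A := Em q (D.Wm 0) (D.Wp 0) r

def Eα₁ (n : ℕ) : A := Ep q (D.Wm 0) (D.Wp 0) n

def GtEα₀ (j r : ℕ) : A := qbr q (D.Gt j) (D.Eα₀ r)

def Eα₁Gt (n i : ℕ) : A := qbr q (D.Eα₁ n) (D.Gt i)

theorem qbr_Gt_Wm_zero (x : ℕ) : qbr q (D.Gt x) (D.Wm 0) = (q - q⁻¹) • D.Wm x := by
  cases x with
  | zero => rw [D.hGt0, qbr_one_left]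
  | succ k => exact D.rel4 k

theorem qbr_Wp_zero_Gt (x : ℕ) : qbr q (D.Wp 0) (D.Gt x) = (q - q⁻¹) • D.Wp x := by
  cases x with
  | zero => rw [D.hGt0, qbr_one_right]
  | succ k => exact D.rel6 k

theorem br_Gt_Eδ (hq0 : q ≠ 0) (x : ℕ) : br (D.Gt x) D.Eδ = 0 := by
  cases x with
  | zero => simp only [br, D.hGt0, one_mul, mul_one, sub_self]
  | succ k =>
    linear_combination (norm := skip) (-q⁻¹) • (D.rel6 k * D.Wm 0) + q⁻¹ • (D.Wp 0 * D.rel4 k)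
      - q⁻¹ • (D.rel4 k * D.Wp 0) + q⁻¹ • (D.Wm 0 * D.rel6 k)
      - (q⁻¹ * (q - q⁻¹)) • D.rel9 (k + 1) 0
    simp only [br, qbr, Eδ, Edel, mul_sub, sub_mul, smul_mul_assoc, mul_smul_comm, smul_sub,
      smul_add, mul_assoc, smul_zero]
    match_scalars <;> field_simp <;> ring

theorem br_Wp_Eδ (hq0 : q ≠ 0) (x : ℕ) :
    br (D.Wp x) D.Eδ
      = ((1 - (q ^ 2)⁻¹) * (1 - (q ^ 4)⁻¹)) • (D.Gt (x + 1) * D.Wp 0 - D.Wp (x + 1)) := by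
  linear_combination (norm := skip) (-((1 - (q ^ 2)⁻¹) * q⁻¹ * q⁻¹ * q⁻¹)) • D.rel6 x
    - ((1 - (q ^ 2)⁻¹) * q⁻¹) • D.rel5 x - (q⁻¹ * q⁻¹) • (D.Wp 0 * D.rel1 x)
    + D.rel1 x * D.Wp 0 - (q⁻¹ * q⁻¹) • (D.rel8 0 x * D.Wm 0) + D.Wm 0 * D.rel8 0 x
  simp only [br, qbr, Eδ, Edel, mul_sub, sub_mul, smul_mul_assoc, mul_smul_comm, smul_sub,
    mul_assoc, smul_zero, mul_zero, zero_mul]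
  match_scalars <;> field_simp <;> ring

theorem Eα₀_succ (r : ℕ) : D.Eα₀ (r + 1) = (q + q⁻¹)⁻¹ • br D.Eδ (D.Eα₀ r) := rfl

theorem Eα₁_succ (n : ℕ) : D.Eα₁ (n + 1) = (q + q⁻¹)⁻¹ • br (D.Eα₁ n) D.Eδ := rfl

theorem GtEα₀_zero_left (r : ℕ) : D.GtEα₀ 0 r = (q - q⁻¹) • D.Eα₀ r := by
  rw [GtEα₀, D.hGt0, qbr_one_left]

theorem GtEα₀_zero_right (j : ℕ) : D.GtEα₀ j 0 = (q - q⁻¹) • D.Wm j :=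
  D.qbr_Gt_Wm_zero j

theorem Eα₁Gt_zero_left (i : ℕ) : D.Eα₁Gt 0 i = (q - q⁻¹) • D.Wp i :=
  D.qbr_Wp_zero_Gt i

theorem Eα₁Gt_zero_right (n : ℕ) : D.Eα₁Gt n 0 = (q - q⁻¹) • D.Eα₁ n := by
  rw [Eα₁Gt, D.hGt0, qbr_one_right]

theorem GtEα₀_succ (hq0 : q ≠ 0) (j r : ℕ) :
    D.GtEα₀ j (r + 1) = (q + q⁻¹)⁻¹ • br D.Eδ (D.GtEα₀ j r) := by
  rw [GtEα₀, Eα₀_succ, qbr_smul_right, qbr_br_right_of_br_eq_zero q (D.br_Gt_Eδ hq0 j), GtEα₀]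

theorem Eα₁Gt_succ (hq0 : q ≠ 0) (n i : ℕ) :
    D.Eα₁Gt (n + 1) i = (q + q⁻¹)⁻¹ • br (D.Eα₁Gt n i) D.Eδ := by
  rw [Eα₁Gt, Eα₁_succ, qbr_smul_left, qbr_br_left_of_br_eq_zero q (D.br_Gt_Eδ hq0 i), Eα₁Gt]

theorem br_GtEα₀_succ (hq0 : q ≠ 0) (Z : A) (j r : ℕ) :
    br Z (D.GtEα₀ j (r + 1))
      = (q + q⁻¹)⁻¹ • (br (br Z D.Eδ) (D.GtEα₀ j r) + br D.Eδ (br Z (D.GtEα₀ j r))) := by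
  rw [D.GtEα₀_succ hq0, br_smul_right, br_br_right]

theorem br_Eα₀_succ (Z : A) (r : ℕ) :
    br Z (D.Eα₀ (r + 1))
      = (q + q⁻¹)⁻¹ • (br (br Z D.Eδ) (D.Eα₀ r) + br D.Eδ (br Z (D.Eα₀ r))) := by
  rw [Eα₀_succ, br_smul_right, br_br_right]

def shiftDefect (W : ℕ → A) (r i j : ℕ) : A :=
  br (W (i + 1)) (D.GtEα₀ j r) - br (W i) (D.GtEα₀ (j + 1) r)
    - (q - q⁻¹) • (D.Gt (i + 1) * br (W j) (D.Eα₀ r) - D.Gt (j + 1) * br (W i) (D.Eα₀ r))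

theorem shiftDefect_smul (c : F) (W : ℕ → A) (r i j : ℕ) :
    D.shiftDefect (fun x => c • W x) r i j = c • D.shiftDefect W r i j := by
  simp only [shiftDefect, br_smul_left, mul_smul_comm, smul_sub, smul_comm c]

theorem shiftDefect_succ (hq0 : q ≠ 0) (W : ℕ → A) (r i j : ℕ) :
    D.shiftDefect W (r + 1) i j = (q + q⁻¹)⁻¹ •
      (D.shiftDefect (fun x => br (W x) D.Eδ) r i j + br D.Eδ (D.shiftDefect W r i j)) := by
  have hGt (x : ℕ) (u : A) := mul_br_of_br_eq_zero (D.br_Gt_Eδ hq0 x) u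
  simp only [shiftDefect, D.br_GtEα₀_succ hq0, br_Eα₀_succ, mul_smul_comm, mul_add, hGt,
    br_sub_right, br_smul_right]
  module

theorem shiftDefect_Gt_eq_zero (hq0 : q ≠ 0) (r i j : ℕ) :
    D.shiftDefect (fun x => D.Gt (x + 1)) r i j = 0 := by
  induction r generalizing i j with
  | zero =>
    rw [shiftDefect, GtEα₀_zero_right, GtEα₀_zero_right]
    linear_combination (norm := skip) congrArg (br (D.Gt (i + 1))) (D.rel4 j)
      - congrArg (br (D.Gt (j + 1))) (D.rel4 i) - (q - q⁻¹) • D.rel11 j (i + 1)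
      - (2 * q - q⁻¹) • (D.rel15 i j * D.Wm 0) + q⁻¹ • (D.Wm 0 * D.rel15 i j)
    simp only [br, qbr, Eα₀, Em, mul_sub, sub_mul, smul_mul_assoc, mul_smul_comm, smul_sub,
      smul_add, mul_assoc, smul_zero, mul_zero, zero_mul]
    match_scalars <;> field_simp <;> ring
  | succ r ih =>
    have hδ : (fun x => br (D.Gt (x + 1)) D.Eδ) = fun _ => 0 :=
      funext fun x => D.br_Gt_Eδ hq0 (x + 1)
    have h0 : D.shiftDefect (fun _ => 0) r i j = 0 := by
      simp only [shiftDefect, br_zero_left, mul_zero, sub_self, smul_zero]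
    rw [shiftDefect_succ _ hq0, hδ, h0, ih, br_zero_right, add_zero, smul_zero]

theorem br_Wp_GtEα₀_symm (r : ℕ) (h : ∀ i j, D.shiftDefect D.Wp r i j = 0) (i j : ℕ) :
    br (D.Wp i) (D.GtEα₀ j r) = br (D.Wp j) (D.GtEα₀ i r) :=
  symm_of_sub_eq_antisymm (fun i j => br (D.Wp i) (D.GtEα₀ j r))
    (fun i j => (q - q⁻¹) • (D.Gt (i + 1) * br (D.Wp j) (D.Eα₀ r)))
    (fun i j => by rw [← smul_sub]; exact sub_eq_zero.mp (h i j)) i j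

theorem shiftDefect_Wp_zero (hq0 : q ≠ 0) (i j : ℕ) : D.shiftDefect D.Wp 0 i j = 0 := by
  rw [shiftDefect, GtEα₀_zero_right, GtEα₀_zero_right]
  linear_combination (norm := skip) (-(q - q⁻¹)) • D.rel9 j (i + 1)
    + congrArg (fun z => br z (D.Wp j)) (D.rel4 i) - congrArg (fun z => br z (D.Wp i)) (D.rel4 j)
    - q⁻¹ • congrArg (br (D.Gt (i + 1))) (D.rel1 j) + q⁻¹ • congrArg (br (D.Gt (j + 1))) (D.rel1 i)
    - (2 * q⁻¹ * (1 - (q ^ 2)⁻¹)) • D.rel15 i j + (q⁻¹ * (1 - (q ^ 2)⁻¹)) • D.rel16 i j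
    + q • (D.rel13 j i * D.Wm 0) - q⁻¹ • (D.Wm 0 * D.rel13 j i)
  simp only [br, qbr, Eα₀, Em, mul_add, add_mul, mul_sub, sub_mul, smul_mul_assoc, mul_smul_comm,
    smul_sub, smul_add, mul_assoc, smul_zero, mul_zero, zero_mul]
  match_scalars <;> field_simp <;> ring

theorem shiftDefect_Gt_mul_Wp_zero_sub_Wp (hq0 : q ≠ 0) (r : ℕ)
    (h : ∀ i j, D.shiftDefect D.Wp r i j = 0) (i j : ℕ) :
    D.shiftDefect (fun x => D.Gt (x + 1) * D.Wp 0 - D.Wp (x + 1)) r i j = 0 := by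
  have hWp0 (x : ℕ) : br (D.Wp 0) (D.GtEα₀ x r) = (q - q⁻¹) • br (D.Wp x) (D.Eα₀ r) := by
    rw [D.br_Wp_GtEα₀_symm r h 0 x, GtEα₀_zero_left, br_smul_right]
  have hWp := h (i + 1) j
  have hGt := D.shiftDefect_Gt_eq_zero hq0 r i j
  rw [shiftDefect] at hWp hGt ⊢
  linear_combination (norm := skip) D.Gt (i + 2) * hWp0 j - D.Gt (i + 1) * hWp0 (j + 1) - hWp
    + hGt * D.Wp 0 - (q - q⁻¹) • (D.rel15 i j * br (D.Wp 0) (D.Eα₀ r))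
  simp only [br, mul_sub, sub_mul, smul_mul_assoc, mul_smul_comm, smul_sub, mul_assoc, smul_zero,
    zero_mul]
  module

theorem shiftDefect_Wp_eq_zero (hq0 : q ≠ 0) (r i j : ℕ) : D.shiftDefect D.Wp r i j = 0 := by
  induction r generalizing i j with
  | zero => exact D.shiftDefect_Wp_zero hq0 i j
  | succ r ih =>
    rw [shiftDefect_succ _ hq0, funext (D.br_Wp_Eδ hq0), shiftDefect_smul,
      D.shiftDefect_Gt_mul_Wp_zero_sub_Wp hq0 r ih, ih, br_zero_right, smul_zero, add_zero,
      smul_zero]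

theorem br_Eα₁Gt_GtEα₀_symm (hq0 : q ≠ 0) (n r i j : ℕ) :
    br (D.Eα₁Gt n i) (D.GtEα₀ j r) = br (D.Eα₁Gt n j) (D.GtEα₀ i r) := by
  induction n generalizing r with
  | zero =>
    rw [Eα₁Gt_zero_left, Eα₁Gt_zero_left, br_smul_left, br_smul_left,
      D.br_Wp_GtEα₀_symm r (D.shiftDefect_Wp_eq_zero hq0 r) i j]
  | succ n ih =>
    have step (a b : ℕ) : br (D.Eα₁Gt (n + 1) a) (D.GtEα₀ b r)
        = (q + q⁻¹)⁻¹ • br (br (D.Eα₁Gt n a) (D.GtEα₀ b r)) D.Eδ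
          + br (D.Eα₁Gt n a) (D.GtEα₀ b (r + 1)) := by
      rw [Eα₁Gt_succ _ hq0, br_smul_left, br_br_left, GtEα₀_succ _ hq0, br_smul_right, smul_add]
    rw [step i j, step j i, ih r, ih (r + 1)]

theorem br_Gt_Ed_succ (hq0 : q ≠ 0) (k n : ℕ) :
    br (D.Gt (k + 1)) (Ed q (D.Wm 0) (D.Wp 0) (n + 1))
      = q⁻¹ • ((q - q⁻¹) • br (D.Eα₁ n) (D.Wm (k + 1)) - br (D.Eα₁Gt n (k + 1)) (D.Wm 0)) := by
  linear_combination (norm := skip) q⁻¹ • (D.Eα₁ n * D.rel4 k - D.rel4 k * D.Eα₁ n)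
  simp only [br, qbr, Ed, Eα₁, Eα₁Gt, mul_sub, sub_mul, smul_mul_assoc, mul_smul_comm,
    smul_sub, mul_assoc]
  match_scalars <;> field_simp <;> ring

end AltData

/-- in `𝒰_q^+`, the element `𝒢̃_{k+1}` commutes with `E_{nδ}` for all
`k, n ∈ ℕ`. -/
theorem stmt16 {F : Type*} [Field F] (q : F) (hq0 : q ≠ 0)
    (hq : ∀ n : ℕ, 0 < n → q ^ n ≠ 1)
    {A : Type*} [Ring A] [Algebra F A] (D : AltData F q A) :
    ∀ k n : ℕ, D.Gt (k + 1) * Ed q (D.Wm 0) (D.Wp 0) n =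
      Ed q (D.Wm 0) (D.Wp 0) n * D.Gt (k + 1) := by
  intro k n
  have hc : q - q⁻¹ ≠ 0 := by
    intro h
    field_simp at h
    exact hq 2 two_pos (by linear_combination h)
  cases n with
  | zero => exact ((Commute.one_right _).smul_right _).eq
  | succ n =>
    have hsymm := D.br_Eα₁Gt_GtEα₀_symm hq0 n 0 0 (k + 1)
    rw [D.Eα₁Gt_zero_right, D.GtEα₀_zero_right, D.GtEα₀_zero_right,
      br_smul_left, br_smul_right, br_smul_right] at hsymm
    rw [← sub_eq_zero]
    change br _ _ = 0
    rw [D.br_Gt_Ed_succ hq0, smul_right_injective A hc hsymm, sub_self, smul_zero]
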